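/- arXiv:1910.05140 — 2 statements merged into one kernel-verified Lean document; each statement's English description precedes it below -/
import Mathlib

section
/- For the concrete Diamond ensemble with r_j = 4j and N = 4M² + 2, the length of the horizontal sides of each partition rectangle, namely 2π√(1 - h_j²)/r_j where h_j = 1 - 2N_j/N and N_j = 2j² - 2j + 1, satisfies π/(√2·√N) < 2π√(1 - h_j²)/(4j) < π√2/√N for all 1 ≤ j ≤ M. -/
open Real

/-!
Since `1 - h_j² = 4 N_j (N - N_j) / N²`, the elementary bounds `j² ≤ N_j < 2 j²` and
`2 N_j < N` (the latter from `j ≤ M`) squeeze `1 - h_j²` strictly between `2 j² / N` and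
`8 j² / N`. Taking square roots and multiplying by `2π / (4j)` gives the two bounds.
-/

theorem one_sub_sq_one_sub_two_mul_div {a N : ℝ} (hN : N ≠ 0) :
    1 - (1 - 2 * a / N) ^ 2 = 4 * a * (N - a) / N ^ 2 := by
  field_simp
  ring

theorem two_mul_sq_div_lt_one_sub_sq {x a N : ℝ} (ha : 0 < a) (hxa : x ^ 2 ≤ a)
    (haN : 2 * a < N) : 2 * x ^ 2 / N < 1 - (1 - 2 * a / N) ^ 2 := by
  have hN : 0 < N := by linarith
  rw [one_sub_sq_one_sub_two_mul_div hN.ne', div_lt_div_iff₀ hN (by positivity)]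
  nlinarith [mul_pos ha (sub_pos.2 haN), mul_le_mul_of_nonneg_right hxa hN.le, mul_pos ha hN]

theorem one_sub_sq_lt_eight_mul_sq_div {x a N : ℝ} (ha : 0 < a) (hax : a < 2 * x ^ 2)
    (hN : 0 < N) : 1 - (1 - 2 * a / N) ^ 2 < 8 * x ^ 2 / N := by
  rw [one_sub_sq_one_sub_two_mul_div hN.ne', div_lt_div_iff₀ (by positivity) hN]
  nlinarith [mul_pos ha ha, mul_pos (sub_pos.2 hax) hN, mul_pos ha hN]

theorem pi_div_sqrt_two_mul_sqrt_lt {x N s : ℝ} (hx : 0 < x) (hN : 0 < N)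
    (hs : 2 * x ^ 2 / N < s) : π / (√2 * √N) < 2 * π * √s / (4 * x) := by
  rw [div_lt_iff₀ hN] at hs
  have key : √2 * x < √N * √s := by
    rw [← sqrt_mul hN.le, lt_sqrt (by positivity), mul_pow, sq_sqrt zero_le_two]
    linarith
  rw [div_lt_div_iff₀ (by positivity) (by positivity)]
  calc π * (4 * x) = 2 * π * √2 * (√2 * x) := by
        linear_combination (-2 * π * x) * mul_self_sqrt zero_le_two
    _ < 2 * π * √2 * (√N * √s) := by gcongr
    _ = 2 * π * √s * (√2 * √N) := by ring

theorem lt_pi_mul_sqrt_two_div_sqrt {x N s : ℝ} (hx : 0 < x) (hN : 0 < N)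
    (hs : s < 8 * x ^ 2 / N) : 2 * π * √s / (4 * x) < π * √2 / √N := by
  rw [lt_div_iff₀ hN] at hs
  have key : √N * √s < 2 * √2 * x := by
    rw [← sqrt_mul hN.le, sqrt_lt' (by positivity), mul_pow, mul_pow, sq_sqrt zero_le_two]
    linarith
  rw [div_lt_div_iff₀ (by positivity) (by positivity)]
  calc 2 * π * √s * √N = 2 * π * (√N * √s) := by ring
    _ < 2 * π * (2 * √2 * x) := by gcongr
    _ = π * √2 * (4 * x) := by ring

theorem diamond_horizontal_side_bounds_general (M : ℕ) (j : ℕ) (hj : 1 ≤ j)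
    (hjM : j ≤ M) (N Nj hj' : ℝ) (hN : N = 4 * (M : ℝ) ^ 2 + 2)
    (hNj : Nj = 2 * (j : ℝ) ^ 2 - 2 * j + 1) (hhj : hj' = 1 - 2 * Nj / N) :
    π / (Real.sqrt 2 * Real.sqrt N) < 2 * π * Real.sqrt (1 - hj' ^ 2) / (4 * j) ∧
      2 * π * Real.sqrt (1 - hj' ^ 2) / (4 * j) < π * Real.sqrt 2 / Real.sqrt N := by
  have hj1 : (1 : ℝ) ≤ j := by exact_mod_cast hj
  have hjM' : (j : ℝ) ≤ M := by exact_mod_cast hjM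
  have hN_pos : 0 < N := by rw [hN]; positivity
  have hNj_pos : 0 < Nj := by nlinarith
  have hsq_le_Nj : (j : ℝ) ^ 2 ≤ Nj := by nlinarith [sq_nonneg ((j : ℝ) - 1)]
  have hNj_lt_two_sq : Nj < 2 * (j : ℝ) ^ 2 := by linarith
  have htwo_Nj_lt : 2 * Nj < N := by nlinarith
  subst hhj
  exact ⟨pi_div_sqrt_two_mul_sqrt_lt (by positivity) hN_pos
      (two_mul_sq_div_lt_one_sub_sq hNj_pos hsq_le_Nj htwo_Nj_lt),
    lt_pi_mul_sqrt_two_div_sqrt (by positivity) hN_pos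
      (one_sub_sq_lt_eight_mul_sq_div hNj_pos hNj_lt_two_sq hN_pos)⟩

/-- For the concrete Diamond ensemble with `r_j = 4j` and `N = 4M² + 2`, the length of
the horizontal sides of each partition rectangle, `2π√(1 - h_j²)/(4j)` where
`h_j = 1 - 2N_j/N` and `N_j = 2j² - 2j + 1`, lies strictly between `π/(√2 √N)` and
`π√2/√N` for all `1 ≤ j ≤ M`. -/
theorem diamond_horizontal_side_bounds (M : ℕ) (hM : 1 ≤ M) (j : ℕ) (hj : 1 ≤ j)
    (hjM : j ≤ M) (N Nj hj' : ℝ) (hN : N = 4 * (M : ℝ) ^ 2 + 2)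
    (hNj : Nj = 2 * (j : ℝ) ^ 2 - 2 * j + 1) (hhj : hj' = 1 - 2 * Nj / N) :
    π / (Real.sqrt 2 * Real.sqrt N) < 2 * π * Real.sqrt (1 - hj' ^ 2) / (4 * j) ∧
      2 * π * Real.sqrt (1 - hj' ^ 2) / (4 * j) < π * Real.sqrt 2 / Real.sqrt N :=
  diamond_horizontal_side_bounds_general M j hj hjM N Nj hj' hN hNj hhj
end

section
/- Under the Diamond ensemble assumptions (r_M ≥ r_{t_1} ≥ cM and N ≤ a_2 M²), the equator-cap discrepancy r_M/(2N) is bounded below by (c/(2√a_2))·(1/√N). Consequently the spherical cap discrepancy of the Diamond ensemble is at least c_1/√N with c_1 = c/(2√a_2). -/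
/-- Under the Diamond ensemble assumptions (`r_M ≥ cM` and `N ≤ a₂ M²`), the
equator-cap discrepancy `r_M/(2N)` is bounded below by `(c/(2√a₂))·(1/√N)`. -/
theorem diamond_discrepancy_lower_bound (c a₂ M N rM : ℝ) (hc : 0 < c) (ha₂ : 0 < a₂)
    (hM : 1 ≤ M) (hN : 0 < N) (hNa : N ≤ a₂ * M ^ 2) (hrM : c * M ≤ rM) :
    (c / (2 * Real.sqrt a₂)) * (1 / Real.sqrt N) ≤ rM / (2 * N) := by
  have hM0 : 0 < M := lt_of_lt_of_le one_pos hM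
  have hsa : 0 < Real.sqrt a₂ := Real.sqrt_pos.mpr ha₂
  have hsN : 0 < Real.sqrt N := Real.sqrt_pos.mpr hN
  have h1 : Real.sqrt N ≤ Real.sqrt a₂ * M := by
    have : Real.sqrt N ≤ Real.sqrt (a₂ * M ^ 2) := Real.sqrt_le_sqrt hNa
    calc Real.sqrt N ≤ Real.sqrt (a₂ * M ^ 2) := this
      _ = Real.sqrt a₂ * M := by
          rw [Real.sqrt_mul ha₂.le, Real.sqrt_sq hM0.le]
  have key : (c / (2 * Real.sqrt a₂)) * (1 / Real.sqrt N) ≤ c * M / (2 * N) := by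
    rw [div_mul_div_comm, mul_one, div_le_div_iff₀ (by positivity) (by positivity)]
    have hNs : N = Real.sqrt N * Real.sqrt N := (Real.mul_self_sqrt hN.le).symm
    calc c * (2 * N) = c * (2 * (Real.sqrt N * Real.sqrt N)) := by rw [← hNs]
      _ ≤ c * M * (2 * Real.sqrt a₂ * Real.sqrt N) := by
          nlinarith [mul_le_mul_of_nonneg_left h1 (by positivity : (0:ℝ) ≤ c * 2 * Real.sqrt N)]
  refine key.trans ?_
  gcongr
end
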